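/- The intersection of two benzenoids is a disjoint union of finitely many benzenoids; i.e., if L_a and L_b are benzenoids, then every connected component of L_a ∩ L_b is a benzenoid. -/

import Mathlib

/-- Hexagons of the infinite hexagonal grid, indexed by integer pairs. -/
abbrev Hexa := ℤ × ℤ

/-- Two hexagons of the grid are adjacent (share an edge). -/
def HexAdj (a b : Hexa) : Prop :=
  (b.1 - a.1, b.2 - a.2) ∈
    ({(1,0), (-1,0), (0,1), (1,1), (0,-1), (-1,-1)} : Set (ℤ × ℤ))

/-- `a` and `b` are joined by a path of pairwise-adjacent hexagons all lying in `K`. -/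
def ReachIn (K : Set Hexa) (a b : Hexa) : Prop :=
  a ∈ K ∧ b ∈ K ∧
    Relation.ReflTransGen (fun x y => HexAdj x y ∧ x ∈ K ∧ y ∈ K) a b

/-- A hexagonal system is connected if any two of its hexagons are joined inside it. -/
def IsConnectedSys (K : Set Hexa) : Prop := ∀ a ∈ K, ∀ b ∈ K, ReachIn K a b

/-- `C` is a connected component of the hexagonal system `K`. -/
def IsComponent (K C : Set Hexa) : Prop := ∃ a ∈ K, C = {b | ReachIn K a b}

/-- A coronoid is a finite connected (nonempty) hexagonal system. -/
def IsCoronoid (K : Set Hexa) : Prop := K.Finite ∧ K.Nonempty ∧ IsConnectedSys K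

/-- A benzenoid is a coronoid whose complement is connected. -/
def IsBenzenoid (K : Set Hexa) : Prop := IsCoronoid K ∧ IsConnectedSys Kᶜ

/-!
Write `K = La ∩ Lb`. Its complement `Laᶜ ∪ Lbᶜ` is connected, being the union of two
connected sets that meet far away from the finite set `La ∪ Lb`. So it suffices that every
component `C` of a finite system `K` with connected complement is a benzenoid, and only the
connectivity of `Cᶜ` needs an argument: a hexagon of `K` outside `C` lies in another component
`D ⊆ Cᶜ`, and the finite set `D` has a boundary hexagon, whose neighbour outside `D` is outside
`K`; so every hexagon of `Cᶜ` is joined inside `Cᶜ` to the connected set `Kᶜ ⊆ Cᶜ`.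
-/

lemma HexAdj.symm {a b : Hexa} (h : HexAdj a b) : HexAdj b a := by
  simp only [HexAdj, Set.mem_insert_iff, Set.mem_singleton_iff, Prod.mk.injEq] at h ⊢
  omega

lemma reflTransGen_hexAdj (a b : Hexa) : Relation.ReflTransGen HexAdj a b := by
  obtain ⟨n, hn⟩ : ∃ n, (b.1 - a.1).natAbs + (b.2 - a.2).natAbs = n := ⟨_, rfl⟩
  induction n generalizing a with
  | zero =>
    obtain rfl : a = b := Prod.ext (by omega) (by omega)
    exact .refl
  | succ n ih =>
    have step : ∀ c, HexAdj a c → (b.1 - c.1).natAbs + (b.2 - c.2).natAbs = n →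
        Relation.ReflTransGen HexAdj a b := fun c hac hc => .head hac (ih c hc)
    rcases lt_trichotomy a.1 b.1 with h1 | h1 | h1
    · exact step (a.1 + 1, a.2) (by simp [HexAdj]) (by simp only; omega)
    · rcases lt_trichotomy a.2 b.2 with h2 | h2 | h2
      · exact step (a.1, a.2 + 1) (by simp [HexAdj]) (by simp only; omega)
      · omega
      · exact step (a.1, a.2 - 1) (by simp [HexAdj]) (by simp only; omega)
    · exact step (a.1 - 1, a.2) (by simp [HexAdj]) (by simp only; omega)

lemma Set.Finite.exists_hexAdj_mem_notMem {S : Set Hexa} (hS : S.Finite) (hne : S.Nonempty) :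
    ∃ y ∈ S, ∃ z, HexAdj y z ∧ z ∉ S := by
  obtain ⟨x, hx⟩ := hne
  by_contra! hclosed
  have hall : ∀ b, b ∈ S := fun b => by
    induction reflTransGen_hexAdj x b with
    | refl => exact hx
    | tail _ hstep ih => exact hclosed _ ih _ hstep
  exact Set.infinite_univ (hS.subset fun b _ => hall b)

section ReachIn

variable {K K' : Set Hexa} {a b c : Hexa}

lemma reachIn_refl (ha : a ∈ K) : ReachIn K a a := ⟨ha, ha, .refl⟩

lemma ReachIn.trans (hab : ReachIn K a b) (hbc : ReachIn K b c) : ReachIn K a c :=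
  ⟨hab.1, hbc.2.1, hab.2.2.trans hbc.2.2⟩

lemma ReachIn.symm (h : ReachIn K a b) : ReachIn K b a := by
  have : Std.Symm fun x y => HexAdj x y ∧ x ∈ K ∧ y ∈ K :=
    ⟨fun _ _ hxy => ⟨hxy.1.symm, hxy.2.2, hxy.2.1⟩⟩
  exact ⟨h.2.1, h.1, Std.Symm.symm _ _ h.2.2⟩

lemma ReachIn.tail (hab : ReachIn K a b) (hbc : HexAdj b c) (hc : c ∈ K) : ReachIn K a c :=
  ⟨hab.1, hc, hab.2.2.tail ⟨hbc, hab.2.1, hc⟩⟩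

lemma ReachIn.mono (hKK' : K ⊆ K') (h : ReachIn K a b) : ReachIn K' a b :=
  ⟨hKK' h.1, hKK' h.2.1,
    Relation.ReflTransGen.mono (fun _ _ hxy => ⟨hxy.1, hKK' hxy.2.1, hKK' hxy.2.2⟩) _ _ h.2.2⟩

lemma ReachIn.mem_right (h : ReachIn K a b) : b ∈ K := h.2.1

lemma reachIn_component (hab : ReachIn K a b) (hbc : ReachIn K b c) :
    ReachIn {x | ReachIn K a x} b c := by
  obtain ⟨-, -, hpath⟩ := hbc
  induction hpath with
  | refl => exact reachIn_refl hab
  | tail _ hstep ih =>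
    exact ih.tail hstep.1 (ih.mem_right.tail hstep.1 hstep.2.2)

end ReachIn

lemma IsConnectedSys.union {S T : Set Hexa} (hS : IsConnectedSys S) (hT : IsConnectedSys T)
    (hST : (S ∩ T).Nonempty) : IsConnectedSys (S ∪ T) := by
  obtain ⟨p, hpS, hpT⟩ := hST
  have toP : ∀ u ∈ S ∪ T, ReachIn (S ∪ T) u p := by
    rintro u (hu | hu)
    · exact (hS u hu p hpS).mono Set.subset_union_left
    · exact (hT u hu p hpT).mono Set.subset_union_right
  exact fun u hu v hv => (toP u hu).trans (toP v hv).symm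

lemma isConnectedSys_compl_inter {La Lb : Set Hexa} (ha : IsBenzenoid La) (hb : IsBenzenoid Lb) :
    IsConnectedSys (La ∩ Lb)ᶜ := by
  rw [Set.compl_inter]
  refine ha.2.union hb.2 ?_
  rw [← Set.compl_union]
  exact (ha.1.1.union hb.1.1).infinite_compl.nonempty

lemma setOf_isComponent_finite {K : Set Hexa} (hK : K.Finite) :
    {C | IsComponent K C}.Finite :=
  (hK.image fun a => {b | ReachIn K a b}).subset fun _ ⟨a, ha, hC⟩ => ⟨a, ha, hC.symm⟩

section Component

variable {K : Set Hexa} {a : Hexa}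

lemma isConnectedSys_component : IsConnectedSys {b | ReachIn K a b} :=
  fun _ hx _ hy => reachIn_component hx (hx.symm.trans hy)

lemma exists_reachIn_compl_component_notMem (hK : K.Finite) {u : Hexa}
    (hu : u ∉ {b | ReachIn K a b}) : ∃ z ∉ K, ReachIn {b | ReachIn K a b}ᶜ u z := by
  by_cases huK : u ∉ K
  · exact ⟨u, huK, reachIn_refl hu⟩
  rw [not_not] at huK
  set D := {b | ReachIn K u b}
  have hDC : D ⊆ {b | ReachIn K a b}ᶜ := fun w huw haw => hu (haw.trans huw.symm)
  have hDfin : D.Finite := hK.subset fun _ (hw : ReachIn K u _) => hw.mem_right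
  obtain ⟨y, hy, z, hyz, hzD⟩ := hDfin.exists_hexAdj_mem_notMem ⟨u, reachIn_refl huK⟩
  have hzK : z ∉ K := fun hzK => hzD (hy.tail hyz hzK)
  have huy : ReachIn {b | ReachIn K a b}ᶜ u y :=
    (reachIn_component (reachIn_refl huK) hy).mono hDC
  exact ⟨z, hzK, huy.tail hyz fun haz => hzK haz.mem_right⟩

lemma isConnectedSys_compl_component (hK : K.Finite) (hKc : IsConnectedSys Kᶜ) :
    IsConnectedSys {b | ReachIn K a b}ᶜ := by
  have hKC : Kᶜ ⊆ {b | ReachIn K a b}ᶜ := fun _ hx hax => hx hax.mem_right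
  obtain ⟨p, hp⟩ := hK.infinite_compl.nonempty
  have toP : ∀ u ∈ {b | ReachIn K a b}ᶜ, ReachIn {b | ReachIn K a b}ᶜ u p := fun u hu => by
    obtain ⟨z, hz, huz⟩ := exists_reachIn_compl_component_notMem hK hu
    exact huz.trans ((hKc z hz p hp).mono hKC)
  exact fun u hu v hv => (toP u hu).trans (toP v hv).symm

lemma IsComponent.isBenzenoid {C : Set Hexa} (hK : K.Finite) (hKc : IsConnectedSys Kᶜ)
    (hC : IsComponent K C) : IsBenzenoid C := by
  obtain ⟨a, ha, rfl⟩ := hC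
  have hCfin : {b | ReachIn K a b}.Finite := hK.subset fun _ hb => hb.mem_right
  exact ⟨⟨hCfin, ⟨a, reachIn_refl ha⟩, isConnectedSys_component⟩,
    isConnectedSys_compl_component hK hKc⟩

end Component

/-- the intersection of two benzenoids is a disjoint union of finitely many
benzenoids: it has finitely many connected components, each of which is a benzenoid. -/
theorem stmt11 (La Lb : Set Hexa) (ha : IsBenzenoid La) (hb : IsBenzenoid Lb) :
    {C | IsComponent (La ∩ Lb) C}.Finite ∧
    (∀ C, IsComponent (La ∩ Lb) C → IsBenzenoid C) := by
  have hK : (La ∩ Lb).Finite := ha.1.1.subset Set.inter_subset_left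
  exact ⟨setOf_isComponent_finite hK,
    fun _ hC => hC.isBenzenoid hK (isConnectedSys_compl_inter ha hb)⟩
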